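/- arXiv:1403.6756 — 3 statements merged into one kernel-verified Lean document; each statement's English description precedes it below -/
import Mathlib

section
/- Let (X, f, ε) be an exterior discrete semi-flow. If X is Lagrange stable at every point of D̄(X), then D̄(X) ⊆ A(L̄(X)). -/
open Set Topology

/-- The omega-limit set of a point `x` under the discrete semi-flow generated by `f`:
`Λ(x) = ⋂ₙ closure {f^[m] x : m ≥ n}`. -/
def Lambda {X : Type*} [TopologicalSpace X] (f : X → X) (x : X) : Set X :=
  ⋂ n : ℕ, closure ((fun m => f^[m] x) '' Set.Ici n)

/-- The omega-limit set of a subset `S`: `Λ(S) = ⋃_{x ∈ S} Λ(x)`. -/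
def LambdaSet {X : Type*} [TopologicalSpace X] (f : X → X) (S : Set X) : Set X :=
  ⋃ x ∈ S, Lambda f x

/-- The region of pseudo-attraction of `S`: `PA(S) = {x : Λ(x) ⊆ S}`. -/
def PA {X : Type*} [TopologicalSpace X] (f : X → X) (S : Set X) : Set X :=
  {x | Lambda f x ⊆ S}

/-- The region of weak-attraction of `S`: `WA(S) = {x : Λ(x) ∩ S ≠ ∅}`. -/
def WA {X : Type*} [TopologicalSpace X] (f : X → X) (S : Set X) : Set X :=
  {x | (Lambda f x ∩ S).Nonempty}

/-- The region of attraction of `S`: `A(S) = {x : ∅ ≠ Λ(x) ⊆ S}`. -/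
def RA {X : Type*} [TopologicalSpace X] (f : X → X) (S : Set X) : Set X :=
  {x | (Lambda f x).Nonempty ∧ Lambda f x ⊆ S}

/-- `X` is (positively) Lagrange stable at `x` if the closure of the trajectory of `x`
is compact. -/
def LagrangeStableAt {X : Type*} [TopologicalSpace X] (f : X → X) (x : X) : Prop :=
  IsCompact (closure (Set.range fun n : ℕ => f^[n] x))

/-- An externology on a topological space: a nonempty family of open sets closed under
finite intersections such that any open set containing a member belongs to the family. -/
def IsExternology {X : Type*} [TopologicalSpace X] (ε : Set (Set X)) : Prop :=
  ε.Nonempty ∧ (∀ E ∈ ε, IsOpen E) ∧ (∀ E ∈ ε, ∀ F ∈ ε, E ∩ F ∈ ε) ∧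
    (∀ E ∈ ε, ∀ U : Set X, IsOpen U → E ⊆ U → U ∈ ε)

/-- The limit space of an externology: `L(X) = ⋂_{E ∈ ε} E`. -/
def limitSpace {X : Type*} (ε : Set (Set X)) : Set X := ⋂ E ∈ ε, E

/-- The bar-limit space of an externology: `L̄(X) = ⋂_{E ∈ ε} closure E`. -/
def barLimit {X : Type*} [TopologicalSpace X] (ε : Set (Set X)) : Set X :=
  ⋂ E ∈ ε, closure E

/-- The region of pseudo-attraction of the externology:
`D(X) = {x : ∀ E ∈ ε, f^[m] x ∈ E for all large m}`. -/
def Dregion {X : Type*} (f : X → X) (ε : Set (Set X)) : Set X :=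
  {x | ∀ E ∈ ε, ∃ n : ℕ, ∀ m ≥ n, f^[m] x ∈ E}

/-- The region of pseudo-bar-attraction of the externology:
`D̄(X) = {x : ∀ E ∈ ε, f^[m] x ∈ closure E for all large m}`. -/
def Dbar {X : Type*} [TopologicalSpace X] (f : X → X) (ε : Set (Set X)) : Set X :=
  {x | ∀ E ∈ ε, ∃ n : ℕ, ∀ m ≥ n, f^[m] x ∈ closure E}

/-- A right-absorbing open subset: an open set that eventually contains the trajectory
of every point. -/
def RightAbsorbing {X : Type*} [TopologicalSpace X] (f : X → X) (E : Set X) : Prop :=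
  IsOpen E ∧ ∀ y : X, ∃ n : ℕ, ∀ m ≥ n, f^[m] y ∈ E

/-- A point `x` is periodic if `f^[n] x = x` for some `n ≥ 1`. -/
def IsPeriodicPoint {X : Type*} (f : X → X) (x : X) : Prop := ∃ n ≥ 1, f^[n] x = x

/-!
`Λ(x)` is the intersection of the nested closed tails of the trajectory of `x`. Lagrange stability
makes these tails compact, so the intersection is nonempty; and for `x ∈ D̄(X)` every `closure E`
contains a whole tail, hence contains `Λ(x)`.
-/

section OmegaLimit

variable {X : Type*} [TopologicalSpace X] (f : X → X) (x : X)

theorem Lambda_nonempty_of_lagrangeStableAt (h : LagrangeStableAt f x) :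
    (Lambda f x).Nonempty :=
  IsCompact.nonempty_iInter_of_sequence_nonempty_isCompact_isClosed _
    (fun n => closure_mono <| image_mono <| Ici_subset_Ici.mpr n.le_succ)
    (fun n => ⟨f^[n] x, subset_closure ⟨n, self_mem_Ici, rfl⟩⟩)
    (h.of_isClosed_subset isClosed_closure (closure_mono (image_subset_range _ _)))
    (fun _ => isClosed_closure)

theorem Lambda_subset_of_eventually_mem {C : Set X} (hC : IsClosed C) {n : ℕ}
    (hn : ∀ m ≥ n, f^[m] x ∈ C) : Lambda f x ⊆ C :=
  (iInter_subset _ n).trans (closure_minimal (image_subset_iff.mpr hn) hC)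

theorem Lambda_subset_barLimit_of_mem_Dbar {ε : Set (Set X)} (hx : x ∈ Dbar f ε) :
    Lambda f x ⊆ barLimit ε :=
  subset_iInter₂ fun E hE =>
    let ⟨_, hn⟩ := hx E hE
    Lambda_subset_of_eventually_mem f x isClosed_closure hn

end OmegaLimit

theorem stmt8_general {X : Type*} [TopologicalSpace X] (f : X → X)
    (ε : Set (Set X))
    (hL : ∀ x ∈ Dbar f ε, LagrangeStableAt f x) :
    Dbar f ε ⊆ RA f (barLimit ε) :=
  fun x hx => ⟨Lambda_nonempty_of_lagrangeStableAt f x (hL x hx),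
    Lambda_subset_barLimit_of_mem_Dbar f x hx⟩

theorem stmt8 {X : Type*} [TopologicalSpace X] (f : X → X) (hf : Continuous f)
    (ε : Set (Set X)) (hε : IsExternology ε) (hflow : ∀ E ∈ ε, f ⁻¹' E ∈ ε)
    (hL : ∀ x ∈ Dbar f ε, LagrangeStableAt f x) :
    Dbar f ε ⊆ RA f (barLimit ε) :=
  stmt8_general f ε hL
end

section
/- Let (X, f, ε) be an exterior discrete semi-flow. If X is Lagrange stable at every point of PA(L(X)) and L(X) = L̄(X), then D(X) = PA(L(X)) = A(L(X)). -/
open Set Topology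

/-!
Once the trajectory closure of `x` is compact, `Λ(x)` is Mathlib's `omegaLimit` of `{x}` along
`atTop`, so it is nonempty and the trajectory eventually enters every open set containing it.
Hence `Λ(x) ⊆ L(X)` forces the trajectory eventually into every `E ∈ ε`, i.e. `x ∈ D(X)`.
Conversely a trajectory eventually in `E` has `Λ(x) ⊆ closure E`, so `D(X) ⊆ PA(L̄(X))`, and
`L̄(X) = L(X)` closes the circle.
-/

open Filter

section Trajectory

variable {X : Type*} [TopologicalSpace X] {f : X → X} {x : X}

theorem Lambda_eq_omegaLimit (f : X → X) (x : X) :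
    Lambda f x = omegaLimit atTop (fun n y => f^[n] y) {x} := by
  ext y
  rw [mem_omegaLimit_singleton_iff_mapClusterPt, MapClusterPt,
    (atTop_basis.map _).clusterPt_iff_forall_mem_closure]
  simp [Lambda]

theorem Lambda_subset_closure_of_forall_ge_mem {E : Set X} {n : ℕ}
    (hn : ∀ m ≥ n, f^[m] x ∈ E) : Lambda f x ⊆ closure E :=
  (iInter_subset _ n).trans (closure_mono (by rintro _ ⟨m, hm, rfl⟩; exact hn m hm))

theorem closure_image2_iterate_univ_singleton (f : X → X) (x : X) :
    closure (image2 (fun n y => f^[n] y) univ {x}) = closure (range fun n : ℕ => f^[n] x) := by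
  simp [image2_singleton_right, image_univ]

theorem LagrangeStableAt.Lambda_nonempty (hx : LagrangeStableAt f x) : (Lambda f x).Nonempty := by
  rw [Lambda_eq_omegaLimit]
  exact nonempty_omegaLimit_of_isCompact_absorbing _ _ _ hx
    ⟨univ, univ_mem, (closure_image2_iterate_univ_singleton f x).subset⟩
    (singleton_nonempty x)

theorem LagrangeStableAt.eventually_mem_of_Lambda_subset (hx : LagrangeStableAt f x)
    {U : Set X} (hU : IsOpen U) (hΛU : Lambda f x ⊆ U) : ∀ᶠ m in atTop, f^[m] x ∈ U := by
  rw [Lambda_eq_omegaLimit] at hΛU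
  obtain ⟨u, hu, huU⟩ :=
    eventually_closure_subset_of_isCompact_absorbing_of_isOpen_of_omegaLimit_subset' _ _ _ hx
      ⟨univ, univ_mem, (closure_image2_iterate_univ_singleton f x).subset⟩ hU hΛU
  filter_upwards [hu] with m hm
  exact huU (subset_closure (mem_image2_of_mem hm rfl))

end Trajectory

section Externology

variable {X : Type*} [TopologicalSpace X]

theorem Dregion_subset_PA_barLimit (f : X → X) (ε : Set (Set X)) :
    Dregion f ε ⊆ PA f (barLimit ε) := fun _ hx _ hy =>
  mem_iInter₂.2 fun E hE =>
    let ⟨_, hn⟩ := hx E hE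
    Lambda_subset_closure_of_forall_ge_mem hn hy

theorem LagrangeStableAt.mem_Dregion {f : X → X} {ε : Set (Set X)} {x : X}
    (hopen : ∀ E ∈ ε, IsOpen E) (hx : LagrangeStableAt f x) (hPA : x ∈ PA f (limitSpace ε)) :
    x ∈ Dregion f ε := fun E hE =>
  eventually_atTop.1 <|
    hx.eventually_mem_of_Lambda_subset (hopen E hE) (hPA.trans (biInter_subset_of_mem hE))

end Externology

theorem stmt10_general {X : Type*} [TopologicalSpace X] (f : X → X)
    (ε : Set (Set X)) (hε : IsExternology ε)
    (hL : ∀ x ∈ PA f (limitSpace ε), LagrangeStableAt f x)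
    (hLbar : limitSpace ε = barLimit ε) :
    Dregion f ε = PA f (limitSpace ε) ∧ PA f (limitSpace ε) = RA f (limitSpace ε) := by
  have hD_PA : Dregion f ε ⊆ PA f (limitSpace ε) := hLbar ▸ Dregion_subset_PA_barLimit f ε
  have hPA_D : PA f (limitSpace ε) ⊆ Dregion f ε := fun x hx => (hL x hx).mem_Dregion hε.2.1 hx
  refine ⟨hD_PA.antisymm hPA_D, ?_⟩
  ext x
  exact ⟨fun hx => ⟨(hL x hx).Lambda_nonempty, hx⟩, And.right⟩

theorem stmt10 {X : Type*} [TopologicalSpace X] (f : X → X) (hf : Continuous f)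
    (ε : Set (Set X)) (hε : IsExternology ε) (hflow : ∀ E ∈ ε, f ⁻¹' E ∈ ε)
    (hL : ∀ x ∈ PA f (limitSpace ε), LagrangeStableAt f x)
    (hLbar : limitSpace ε = barLimit ε) :
    Dregion f ε = PA f (limitSpace ε) ∧ PA f (limitSpace ε) = RA f (limitSpace ε) :=
  stmt10_general f ε hε hL hLbar
end

section
/- Let X be a locally compact regular topological space and f : X → X a continuous map. If x ∉ closure(Λ(X)), where Λ(X) = ⋃_{y ∈ X} Λ(y), then there exists an open neighborhood V of x such that X \ closure(V) is a right-absorbing open subset of X. -/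
open Set Topology

/-! Take a compact closed neighbourhood `L` of `x` avoiding `closure Λ(X)` and `V = interior L`.
An orbit that returned to the compact set `closure V ⊆ L` infinitely often would have a
cluster point there, i.e. a point of `Λ(X)`; so every orbit eventually stays outside it. -/

theorem mem_Lambda_iff_mapClusterPt {X : Type*} [TopologicalSpace X] {f : X → X} {y z : X} :
    z ∈ Lambda f y ↔ MapClusterPt z Filter.atTop (fun m => f^[m] y) := by
  rw [mapClusterPt_atTop_iff_forall_mem_closure, Lambda, mem_iInter]

theorem IsCompact.eventually_iterate_notMem_of_disjoint_LambdaSet {X : Type*}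
    [TopologicalSpace X] {f : X → X} {K : Set X} (hK : IsCompact K)
    (hKΛ : Disjoint K (LambdaSet f univ)) (y : X) : ∀ᶠ m in Filter.atTop, f^[m] y ∉ K := by
  by_contra h
  simp only [Filter.not_eventually, not_not] at h
  obtain ⟨z, hzK, hz⟩ := hK.exists_mapClusterPt_of_frequently h
  exact hKΛ.notMem_of_mem_left hzK (mem_biUnion (mem_univ y) (mem_Lambda_iff_mapClusterPt.2 hz))

theorem rightAbsorbing_compl_of_isCompact_of_disjoint_LambdaSet {X : Type*}
    [TopologicalSpace X] {f : X → X} {K : Set X} (hK : IsCompact K) (hKc : IsClosed K)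
    (hKΛ : Disjoint K (LambdaSet f univ)) : RightAbsorbing f Kᶜ :=
  ⟨hKc.isOpen_compl, fun y => Filter.eventually_atTop.1
    (hK.eventually_iterate_notMem_of_disjoint_LambdaSet hKΛ y)⟩

theorem stmt18_general {X : Type*} [TopologicalSpace X] [LocallyCompactSpace X] [RegularSpace X]
    (f : X → X) (x : X)
    (hx : x ∉ closure (LambdaSet f (Set.univ : Set X))) :
    ∃ V : Set X, IsOpen V ∧ x ∈ V ∧ RightAbsorbing f ((closure V)ᶜ) := by
  obtain ⟨L, hLc, hLcl, hxL, hLΛ⟩ := exists_compact_closed_between isCompact_singleton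
    isClosed_closure.isOpen_compl (singleton_subset_iff.2 hx)
  have hVL : closure (interior L) ⊆ L := closure_minimal interior_subset hLcl
  refine ⟨interior L, isOpen_interior, singleton_subset_iff.1 hxL, ?_⟩
  exact rightAbsorbing_compl_of_isCompact_of_disjoint_LambdaSet
    (hLc.of_isClosed_subset isClosed_closure hVL) isClosed_closure
    ((disjoint_compl_left.mono_left (hVL.trans hLΛ)).mono_right subset_closure)

theorem stmt18 {X : Type*} [TopologicalSpace X] [LocallyCompactSpace X] [RegularSpace X]
    (f : X → X) (hf : Continuous f) (x : X)
    (hx : x ∉ closure (LambdaSet f (Set.univ : Set X))) :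
    ∃ V : Set X, IsOpen V ∧ x ∈ V ∧ RightAbsorbing f ((closure V)ᶜ) :=
  stmt18_general f x hx
end
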